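/- Let 0 < λ_min ≤ λ_max and 0 ≤ ε_c < ε. Assume f* : ℝ^n → ℝ is finite everywhere and differentiable, that for every u ∈ ℝ^n the supremum defining f*(u) is attained at ∇f*(u), and that f* is V-smooth for some V : ℝ^n → [0, ∞) with V(0) = 0. Let λ_0 = λ_max > λ_1 > ⋯ > λ_{T−1} > 0 with λ_{T−1} ≤ λ_min, generated by λ_{t+1} = λ_t(1 − ρ_t) where ρ_t ∈ [0, 1), and let (β_t, θ_t) ∈ ℝ^p × ℝ^n for t = 0, …, T−1 satisfy: Ω(β_t) and Ω*(X^⊤θ_t) are finite, Gap_t ≤ ε_c, and Q_{t,V}(ρ') ≤ ε for all ρ' ∈ [0, ρ_t]. Then {β_0, …, β_{T−1}} is an ε-path for [λ_min, λ_max]. -/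

import Mathlib

open scoped RealInnerProductSpace

noncomputable section

abbrev Vec (d : ℕ) := EuclideanSpace ℝ (Fin d)

/-- Matrix–vector product, landing in Euclidean space. -/
def mv {a b : ℕ} (M : Matrix (Fin a) (Fin b) ℝ) (v : Vec b) : Vec a := WithLp.toLp 2 (M.mulVec v)

/-- Fenchel conjugate of a real-valued function, with values in `EReal`. -/
noncomputable def rconj {d : ℕ} (f : Vec d → ℝ) (u : Vec d) : EReal :=
  ⨆ x, ((⟪u, x⟫ - f x : ℝ) : EReal)

/-- Fenchel conjugate of an `EReal`-valued function. -/
noncomputable def econj {d : ℕ} (g : Vec d → EReal) (u : Vec d) : EReal :=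
  ⨆ x, (((⟪u, x⟫ : ℝ) : EReal) - g x)

/-- Primal objective `P_λ(β) = f(Xβ) + λ Ω(β)`, with values in `EReal`. -/
noncomputable def Pfun {n p : ℕ} (X : Matrix (Fin n) (Fin p) ℝ)
    (f : Vec n → ℝ) (Ω : Vec p → EReal) (lam : ℝ) (b : Vec p) : EReal :=
  ((f (mv X b) : ℝ) : EReal) + ((lam : ℝ) : EReal) * Ω b

/-- `β` is an `ε`-solution for `λ`: `P_λ(β) - inf P_λ ≤ ε`. -/
noncomputable def epsSolution {n p : ℕ} (X : Matrix (Fin n) (Fin p) ℝ)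
    (f : Vec n → ℝ) (Ω : Vec p → EReal) (lam ε : ℝ) (β : Vec p) : Prop :=
  Pfun X f Ω lam β - (⨅ b, Pfun X f Ω lam b) ≤ (ε : EReal)

/-! By weak duality, `Gap_λ(β, θ)` bounds the suboptimality of `β` for `λ`. A value
`λ = λ_t (1 - ρ)` has dual point `-λ θ_t = (1 - ρ) ζ_t`, so `V`-smoothness of `f*` at `ζ_t`,
combined with the Fenchel–Young equality `⟪∇f*(ζ_t), ζ_t⟫ = f*(ζ_t) + f(∇f*(ζ_t))`, gives
`Gap_λ(β_t, θ_t) ≤ Q_{t,V}(ρ)`. Every `λ ∈ [λ_min, λ_max]` is either `λ_0`, covered by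
`Gap_0 ≤ ε_c`, or lies in some `[λ_{t+1}, λ_t)`, i.e. is `λ_t (1 - ρ)` with `ρ ∈ [0, ρ_t]`. -/

theorem inner_mv_transpose {n p : ℕ} (X : Matrix (Fin n) (Fin p) ℝ) (θ : Vec n) (c : Vec p) :
    ⟪mv X.transpose θ, c⟫ = ⟪θ, mv X c⟫ := by
  simp only [mv, EuclideanSpace.inner_eq_star_dotProduct, star_trivial, Matrix.mulVec_transpose]
  rw [dotProduct_comm, ← Matrix.dotProduct_mulVec, dotProduct_comm]

theorem inner_sub_le_of_rconj_eq {d : ℕ} {f fstar : Vec d → ℝ}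
    (hconj : ∀ u, rconj f u = fstar u) (u x : Vec d) : ⟪u, x⟫ - f x ≤ fstar u :=
  EReal.coe_le_coe_iff.mp <| hconj u ▸ le_iSup (fun x => ((⟪u, x⟫ - f x : ℝ) : EReal)) x

theorem coe_inner_sub_le_econj {d : ℕ} (g : Vec d → EReal) (u x : Vec d) :
    ((⟪u, x⟫ : ℝ) : EReal) - g x ≤ econj g u :=
  le_iSup (fun x => ((⟪u, x⟫ : ℝ) : EReal) - g x) x

section DualityGap

variable {n p : ℕ} (X : Matrix (Fin n) (Fin p) ℝ) (f fstar : Vec n → ℝ)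

/-- `Gap_λ(b, θ)` once `Ω(b) = ωb` and `Ω*(Xᵀθ) = ωs` are known to be finite. -/
def dualityGap (lam : ℝ) (b : Vec p) (θ : Vec n) (ωb ωs : ℝ) : ℝ :=
  f (mv X b) + fstar ((-lam) • θ) + lam * (ωb + ωs)

/-- `Q_{φ}(ρ)` at the pair `(b, θ)` for `λ`, with `fstar'` the point attaining `f*`. -/
def gapBound (fstar' : Vec n → Vec n) (φ : Vec n → ℝ) (lam : ℝ) (b : Vec p) (θ : Vec n)
    (ωb ωs ρ : ℝ) : ℝ :=
  dualityGap X f fstar lam b θ ωb ωs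
    + ρ * ((f (mv X b) - f (fstar' ((-lam) • θ))) - dualityGap X f fstar lam b θ ωb ωs)
    + φ ((-ρ) • ((-lam) • θ))

theorem le_Pfun_of_econj_eq {Ω : Vec p → EReal} (hconj : ∀ u, rconj f u = fstar u)
    {lam : ℝ} (hlam : 0 < lam) {θ : Vec n} {ωs : ℝ} (hΩs : econj Ω (mv X.transpose θ) = ωs)
    (c : Vec p) : ((-fstar ((-lam) • θ) - lam * ωs : ℝ) : EReal) ≤ Pfun X f Ω lam c := by
  have hΩc := coe_inner_sub_le_econj Ω (mv X.transpose θ) c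
  rw [hΩs] at hΩc
  induction hω : Ω c using EReal.rec with
  | bot => simp [hω] at hΩc
  | top => simp [Pfun, hω, EReal.coe_mul_top_of_pos hlam]
  | coe w =>
    rw [hω, ← EReal.coe_sub, EReal.coe_le_coe_iff, inner_mv_transpose] at hΩc
    have hf := inner_sub_le_of_rconj_eq hconj ((-lam) • θ) (mv X c)
    rw [real_inner_smul_left] at hf
    rw [Pfun, hω, ← EReal.coe_mul, ← EReal.coe_add, EReal.coe_le_coe_iff]
    linarith [mul_le_mul_of_nonneg_left hΩc hlam.le]

theorem epsSolution_of_dualityGap_le {Ω : Vec p → EReal} (hconj : ∀ u, rconj f u = fstar u)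
    {lam ε : ℝ} (hlam : 0 < lam) {b : Vec p} {θ : Vec n} {ωb ωs : ℝ}
    (hΩb : Ω b = ωb) (hΩs : econj Ω (mv X.transpose θ) = ωs)
    (hgap : dualityGap X f fstar lam b θ ωb ωs ≤ ε) : epsSolution X f Ω lam ε b := by
  have hinf : ((-fstar ((-lam) • θ) - lam * ωs : ℝ) : EReal) ≤ ⨅ c, Pfun X f Ω lam c :=
    le_iInf (le_Pfun_of_econj_eq X f fstar hconj hlam hΩs)
  calc Pfun X f Ω lam b - ⨅ c, Pfun X f Ω lam c
      ≤ ((f (mv X b) + lam * ωb : ℝ) : EReal) - ((-fstar ((-lam) • θ) - lam * ωs : ℝ) : EReal) := by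
        rw [Pfun, hΩb, ← EReal.coe_mul, ← EReal.coe_add]
        exact EReal.sub_le_sub le_rfl hinf
    _ ≤ ε := by
        rw [← EReal.coe_sub, EReal.coe_le_coe_iff]
        unfold dualityGap at hgap
        linarith

theorem dualityGap_mul_one_sub_le_gapBound {fstar' : Vec n → Vec n} {V : Vec n → ℝ}
    (hatt : ∀ u, fstar u = ⟪u, fstar' u⟫ - f (fstar' u))
    (hsm : ∀ x z : Vec n, fstar z - fstar x - ⟪fstar' x, z - x⟫ ≤ V (z - x))
    (lam ρ : ℝ) (b : Vec p) (θ : Vec n) (ωb ωs : ℝ) :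
    dualityGap X f fstar (lam * (1 - ρ)) b θ ωb ωs ≤ gapBound X f fstar fstar' V lam b θ ωb ωs ρ := by
  set ζ := (-lam) • θ
  have hsmul : (-(lam * (1 - ρ))) • θ = (1 - ρ) • ζ := by rw [smul_smul]; ring_nf
  have hstep := hsm ζ ((1 - ρ) • ζ)
  rw [show (1 - ρ) • ζ - ζ = (-ρ) • ζ by module, real_inner_smul_right] at hstep
  -- equality case of Fenchel–Young at the maximiser `fstar' ζ`
  have hyoung : ⟪fstar' ζ, ζ⟫ = fstar ζ + f (fstar' ζ) := by
    rw [real_inner_comm]; linarith [hatt ζ]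
  rw [dualityGap, gapBound, dualityGap, hsmul]
  linear_combination hstep - ρ * hyoung

theorem epsSolution_of_forall_gapBound_le {Ω : Vec p → EReal} {fstar' : Vec n → Vec n}
    {V : Vec n → ℝ} (hconj : ∀ u, rconj f u = fstar u)
    (hatt : ∀ u, fstar u = ⟪u, fstar' u⟫ - f (fstar' u))
    (hsm : ∀ x z : Vec n, fstar z - fstar x - ⟪fstar' x, z - x⟫ ≤ V (z - x))
    {lam ρ l ε : ℝ} (hlam : 0 < lam) (hl : 0 < l) (hρl : lam * (1 - ρ) ≤ l) (hllam : l ≤ lam)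
    {b : Vec p} {θ : Vec n} {ωb ωs : ℝ}
    (hΩb : Ω b = ωb) (hΩs : econj Ω (mv X.transpose θ) = ωs)
    (hQ : ∀ ρ' ∈ Set.Icc 0 ρ, gapBound X f fstar fstar' V lam b θ ωb ωs ρ' ≤ ε) :
    epsSolution X f Ω l ε b := by
  have hl_eq : l = lam * (1 - (1 - l / lam)) := by field_simp; ring
  have hρ' : 1 - l / lam ∈ Set.Icc 0 ρ := by
    constructor
    · linarith [(div_le_one hlam).mpr hllam]
    · linarith [(le_div_iff₀ hlam).mpr (by linarith : (1 - ρ) * lam ≤ l)]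
  refine epsSolution_of_dualityGap_le X f fstar hconj hl hΩb hΩs ?_
  rw [hl_eq]
  exact (dualityGap_mul_one_sub_le_gapBound X f fstar hatt hsm _ _ _ _ _ _).trans (hQ _ hρ')

end DualityGap

theorem exists_le_lt_of_le_of_lt {α : Type*} [LinearOrder α] (a : ℕ → α) {x : α} {N : ℕ}
    (hN : a N ≤ x) (h0 : x < a 0) : ∃ t < N, a (t + 1) ≤ x ∧ x < a t := by
  induction N with
  | zero => exact absurd h0 hN.not_gt
  | succ N ih =>
    rcases le_or_gt (a N) x with hle | hlt
    · obtain ⟨t, ht, hbracket⟩ := ih hle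
      exact ⟨t, by omega, hbracket⟩
    · exact ⟨N, by omega, hN, hlt⟩

theorem stmt11_general {n p : ℕ} (X : Matrix (Fin n) (Fin p) ℝ)
    (f : Vec n → ℝ)
    (Ω : Vec p → EReal)
    (fstar : Vec n → ℝ)
    (hconj : ∀ u, rconj f u = ((fstar u : ℝ) : EReal))
    (fstar' : Vec n → Vec n)
    (hatt : ∀ u, fstar u = ⟪u, fstar' u⟫ - f (fstar' u))
    (V : Vec n → ℝ)
    (hsm : ∀ x z : Vec n, fstar z - fstar x - ⟪fstar' x, z - x⟫ ≤ V (z - x))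
    (lammin lammax : ℝ)
    (ε εc : ℝ) (hεcε : εc < ε)
    (T : ℕ) (hT : 1 ≤ T)
    (lam rho : ℕ → ℝ)
    (hlam0 : lam 0 = lammax)
    (hpos : ∀ t < T, 0 < lam t)
    (hgen : ∀ t, t + 1 < T → lam (t + 1) = lam t * (1 - rho t))
    (hlast : lam (T - 1) ≤ lammin)
    (β : ℕ → Vec p) (θ : ℕ → Vec n) (Ωβ Ωs : ℕ → ℝ)
    (hΩβ : ∀ t < T, Ω (β t) = ((Ωβ t : ℝ) : EReal))
    (hΩs : ∀ t < T, econj Ω (mv X.transpose (θ t)) = ((Ωs t : ℝ) : EReal))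
    (hGap : ∀ t < T,
      f (mv X (β t)) + fstar ((-(lam t)) • θ t) + lam t * (Ωβ t + Ωs t) ≤ εc)
    (hQ : ∀ t, t + 1 < T → ∀ ρ' ∈ Set.Icc (0 : ℝ) (rho t),
      (f (mv X (β t)) + fstar ((-(lam t)) • θ t) + lam t * (Ωβ t + Ωs t))
        + ρ' * ((f (mv X (β t)) - f (fstar' ((-(lam t)) • θ t)))
            - (f (mv X (β t)) + fstar ((-(lam t)) • θ t) + lam t * (Ωβ t + Ωs t)))
        + V ((-ρ') • ((-(lam t)) • θ t)) ≤ ε) :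
    ∀ l ∈ Set.Icc lammin lammax, ∃ t < T, epsSolution X f Ω l ε (β t) := by
  rintro l ⟨hminl, hlmax⟩
  rcases (hlam0 ▸ hlmax).eq_or_lt with rfl | hl0
  · exact ⟨0, hT, epsSolution_of_dualityGap_le X f fstar hconj (hpos 0 hT) (hΩβ 0 hT)
      (hΩs 0 hT) ((hGap 0 hT).trans hεcε.le)⟩
  obtain ⟨t, htlast, hlow, hup⟩ := exists_le_lt_of_le_of_lt lam (hlast.trans hminl) hl0
  have ht : t + 1 < T := by omega
  have htT : t < T := by omega
  exact ⟨t, htT, epsSolution_of_forall_gapBound_le X f fstar hconj hatt hsm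
    (hpos t htT) ((hpos (t + 1) ht).trans_le hlow) (hgen t ht ▸ hlow) hup.le
    (hΩβ t htT) (hΩs t htT) (hQ t ht)⟩

/-- unilateral approximation path is an `ε`-path.
`f*` is everywhere finite (real values `fstar`), differentiable with gradient `fstar'`
at which its defining supremum is attained, and `V`-smooth.  The grid
`λ_0 = λ_max > ⋯ > λ_{T-1} > 0`, `λ_{T-1} ≤ λ_min`, is generated by
`λ_{t+1} = λ_t (1 - ρ_t)` with `ρ_t ∈ [0,1)`; the pairs `(β_t, θ_t)` have finite
`Ω(β_t)`, `Ω*(Xᵀθ_t)`, satisfy `Gap_t ≤ ε_c < ε` and `Q_{t,V}(ρ') ≤ ε` for all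
`ρ' ∈ [0, ρ_t]`.  Then `{β_0, …, β_{T-1}}` is an `ε`-path for `[λ_min, λ_max]`. -/
theorem stmt11 {n p : ℕ} (X : Matrix (Fin n) (Fin p) ℝ)
    (f : Vec n → ℝ) (hconv : ConvexOn ℝ Set.univ f)
    (Ω : Vec p → EReal)
    (fstar : Vec n → ℝ)
    (hconj : ∀ u, rconj f u = ((fstar u : ℝ) : EReal))
    (fstar' : Vec n → Vec n)
    (hdiff : ∀ u, HasGradientAt fstar (fstar' u) u)
    (hatt : ∀ u, fstar u = ⟪u, fstar' u⟫ - f (fstar' u))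
    (V : Vec n → ℝ) (hV0 : V 0 = 0) (hVnn : ∀ v, 0 ≤ V v)
    (hsm : ∀ x z : Vec n, fstar z - fstar x - ⟪fstar' x, z - x⟫ ≤ V (z - x))
    (lammin lammax : ℝ) (hmin : 0 < lammin) (hminmax : lammin ≤ lammax)
    (ε εc : ℝ) (hεc : 0 ≤ εc) (hεcε : εc < ε)
    (T : ℕ) (hT : 1 ≤ T)
    (lam rho : ℕ → ℝ)
    (hlam0 : lam 0 = lammax)
    (hpos : ∀ t < T, 0 < lam t)
    (hdec : ∀ t, t + 1 < T → lam (t + 1) < lam t)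
    (hgen : ∀ t, t + 1 < T → lam (t + 1) = lam t * (1 - rho t))
    (hrho : ∀ t, t + 1 < T → 0 ≤ rho t ∧ rho t < 1)
    (hlast : lam (T - 1) ≤ lammin)
    (β : ℕ → Vec p) (θ : ℕ → Vec n) (Ωβ Ωs : ℕ → ℝ)
    (hΩβ : ∀ t < T, Ω (β t) = ((Ωβ t : ℝ) : EReal))
    (hΩs : ∀ t < T, econj Ω (mv X.transpose (θ t)) = ((Ωs t : ℝ) : EReal))
    (hGap : ∀ t < T,
      f (mv X (β t)) + fstar ((-(lam t)) • θ t) + lam t * (Ωβ t + Ωs t) ≤ εc)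
    (hQ : ∀ t, t + 1 < T → ∀ ρ' ∈ Set.Icc (0 : ℝ) (rho t),
      (f (mv X (β t)) + fstar ((-(lam t)) • θ t) + lam t * (Ωβ t + Ωs t))
        + ρ' * ((f (mv X (β t)) - f (fstar' ((-(lam t)) • θ t)))
            - (f (mv X (β t)) + fstar ((-(lam t)) • θ t) + lam t * (Ωβ t + Ωs t)))
        + V ((-ρ') • ((-(lam t)) • θ t)) ≤ ε) :
    ∀ l ∈ Set.Icc lammin lammax, ∃ t < T, epsSolution X f Ω l ε (β t) :=
  stmt11_general X f Ω fstar hconj fstar' hatt V hsm lammin lammax ε εc hεcε T hT lam rho hlam0 hpos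
    hgen hlast β θ Ωβ Ωs hΩβ hΩs hGap hQ

end
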